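/- Lipschitz gradient of the row- and column-wise loss: assume W has at least one nonzero entry and define L_x = (max over observed entries of X minus min over observed entries of X)^2, L_w = max_j (Σ_i W_{ij})/n1 + max_i (Σ_j W_{ij})/n2, and L_f = L_x L_w / 2. Then for all M1, M2 ∈ ℝ^{n1×n2}, ‖∇L(M1) − ∇L(M2)‖_F ≤ L_f ‖M1 − M2‖_F. -/

import Mathlib

open scoped BigOperators Classical
open MeasureTheory ProbabilityTheory Matrix

noncomputable section

namespace NMC

/-- Real `n1 × n2` matrices. -/
abbrev Mat (n1 n2 : ℕ) := Matrix (Fin n1) (Fin n2) ℝ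

variable {n1 n2 : ℕ}

/-- The pairwise pseudo-log-likelihood loss
`l_{i1j1,i2j2}(m1,m2) = log(1 + exp(−(x1 − x2)(m1 − m2)))`. -/
def pl (x1 x2 m1 m2 : ℝ) : ℝ := Real.log (1 + Real.exp (-((x1 - x2) * (m1 - m2))))

/-- The row- and column-wise matrix U-statistic loss `L(M)`. -/
def lossL (X W M : Mat n1 n2) : ℝ :=
  (1 / (n2 : ℝ)) * ∑ i : Fin n1, ∑ j1 : Fin n2, ∑ j2 : Fin n2,
      W i j1 * W i j2 * pl (X i j1) (X i j2) (M i j1) (M i j2) +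
  (1 / (n1 : ℝ)) * ∑ j : Fin n2, ∑ i1 : Fin n1, ∑ i2 : Fin n1,
      W i1 j * W i2 j * pl (X i1 j) (X i2 j) (M i1 j) (M i2 j)

/-- Update a single entry of a matrix. -/
def updEntry (M : Mat n1 n2) (i : Fin n1) (j : Fin n2) (t : ℝ) : Mat n1 n2 :=
  fun i' j' => if i' = i ∧ j' = j then t else M i' j'

/-- The gradient matrix `∇L(M)`, whose `(i,j)` entry is the partial derivative
`∂L(M)/∂m_{ij}`. -/
def gradL (X W M : Mat n1 n2) : Mat n1 n2 :=
  fun i j => deriv (fun t => lossL X W (updEntry M i j t)) (M i j)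

/-- Frobenius norm. -/
def frobNorm (A : Mat n1 n2) : ℝ := Real.sqrt (∑ i, ∑ j, A i j ^ 2)

/-- Entrywise sup norm `‖A‖_∞ = max_{i,j} |a_{ij}|`. -/
def infNorm (A : Mat n1 n2) : ℝ := sSup (Set.range fun p : Fin n1 × Fin n2 => |A p.1 p.2|)

/-- The (unsorted) singular values of `A`: square roots of eigenvalues of `Aᴴ A`. -/
def svalsUnsorted (A : Mat n1 n2) : Fin n2 → ℝ :=
  fun k => Real.sqrt ((Matrix.isHermitian_conjTranspose_mul_self A).eigenvalues k)

/-- Nuclear norm `‖A‖_*`: sum of the singular values. -/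
def nuclNorm (A : Mat n1 n2) : ℝ := ∑ k, svalsUnsorted A k

/-- `sval A k` is the `k`-th largest singular value of `A` (1-indexed), `σ_k(A)`. -/
def sval (A : Mat n1 n2) (k : ℕ) : ℝ :=
  if h : 1 ≤ k ∧ k ≤ n2 then
    svalsUnsorted A (Tuple.sort (svalsUnsorted A) ⟨n2 - k, by omega⟩)
  else 0

/-- Spectral norm `‖A‖ = σ_1(A)`. -/
def specNorm (A : Mat n1 n2) : ℝ := sval A 1

/-- Tail sum of singular values `Σ_{k=r}^{n1 ∧ n2} σ_k(A)`. -/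
def tailSum (A : Mat n1 n2) (r : ℕ) : ℝ := ∑ k ∈ Finset.Icc r (min n1 n2), sval A k

/-- Mean of the entries of a matrix, `M_m(A) = 1ᵀ A 1/(n1 n2)`. -/
def matMean (A : Mat n1 n2) : ℝ := (∑ i, ∑ j, A i j) / ((n1 : ℝ) * (n2 : ℝ))

/-- `M ⊕ c = M + c 1 1ᵀ`. -/
def oplus (M : Mat n1 n2) (c : ℝ) : Mat n1 n2 := fun i j => M i j + c

/-- The weights `𝒲_{i1j1,i2j2}`. -/
def wgt (al : ℝ) (X W : Mat n1 n2) (i1 : Fin n1) (j1 : Fin n2) (i2 : Fin n1) (j2 : Fin n2) : ℝ :=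
  W i1 j1 * W i2 j2 * (X i1 j1 - X i2 j2) ^ 2 /
    (4 + 2 * Real.exp (2 * al * (X i1 j1 - X i2 j2)) +
      2 * Real.exp (2 * al * (X i2 j2 - X i1 j1)))

/-- The sample semi-norm squared `D_s²(M)`. -/
def Ds2 (al : ℝ) (X W M : Mat n1 n2) : ℝ :=
  (1 / (n2 : ℝ)) * ∑ i : Fin n1, ∑ j1 : Fin n2, ∑ j2 : Fin n2,
      (M i j1 - M i j2) ^ 2 * wgt al X W i j1 i j2 +
  (1 / (n1 : ℝ)) * ∑ j : Fin n2, ∑ i1 : Fin n1, ∑ i2 : Fin n1,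
      (M i1 j - M i2 j) ^ 2 * wgt al X W i1 j i2 j

/-- The population semi-norm squared `D²(M)` (all weights equal to 1). -/
def D2 (M : Mat n1 n2) : ℝ :=
  (1 / (n2 : ℝ)) * ∑ i : Fin n1, ∑ j1 : Fin n2, ∑ j2 : Fin n2, (M i j1 - M i j2) ^ 2 +
  (1 / (n1 : ℝ)) * ∑ j : Fin n2, ∑ i1 : Fin n1, ∑ i2 : Fin n1, (M i1 j - M i2 j) ^ 2

/-- `L_x`: squared range of the observed entries of `X`. -/
def Lx (X W : Mat n1 n2) : ℝ :=
  (sSup {x : ℝ | ∃ p : Fin n1 × Fin n2, W p.1 p.2 = 1 ∧ x = X p.1 p.2} -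
    sInf {x : ℝ | ∃ p : Fin n1 × Fin n2, W p.1 p.2 = 1 ∧ x = X p.1 p.2}) ^ 2

/-- `L_w = max_j (Σ_i W_{ij})/n1 + max_i (Σ_j W_{ij})/n2`. -/
def Lw (W : Mat n1 n2) : ℝ :=
  sSup (Set.range fun j : Fin n2 => ∑ i, W i j) / (n1 : ℝ) +
  sSup (Set.range fun i : Fin n1 => ∑ j, W i j) / (n2 : ℝ)

/-- `L_f = L_x L_w / 2`, the Lipschitz constant of `∇L`. -/
def Lf (X W : Mat n1 n2) : ℝ := Lx X W * Lw W / 2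

/-- The objective of the proximal problem defining `S_{lam,al}(A)`. -/
def proxObj (lam : ℝ) (A Y : Mat n1 n2) : ℝ := 1 / 2 * frobNorm (Y - A) ^ 2 + lam * nuclNorm Y

/-- `IsProx lam al A Y` states that `Y = S_{lam,al}(A)`, i.e. `Y` minimizes
`(1/2)‖Y − A‖_F² + lam ‖Y‖_*` over `{Y : ‖Y‖_∞ ≤ al}`. -/
def IsProx (lam al : ℝ) (A Y : Mat n1 n2) : Prop :=
  infNorm Y ≤ al ∧ ∀ Z : Mat n1 n2, infNorm Z ≤ al → proxObj lam A Y ≤ proxObj lam A Z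

/-- The penalized objective `F(M) = L(M) + lam ‖M‖_*`. -/
def objF (X W : Mat n1 n2) (lam : ℝ) (M : Mat n1 n2) : ℝ := lossL X W M + lam * nuclNorm M

/-- `Mh` is a minimizer of `L(M) + lam ‖M‖_*` over `{M : ‖M‖_∞ ≤ al}`. -/
def IsMin (X W : Mat n1 n2) (lam al : ℝ) (Mh : Mat n1 n2) : Prop :=
  infNorm Mh ≤ al ∧ ∀ M : Mat n1 n2, infNorm M ≤ al → objF X W lam Mh ≤ objF X W lam M

/-- `c` minimizes `c' ↦ ‖M ⊕ c'‖_*`; then `T(M) = M ⊕ c`. -/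
def IsMinShift (M : Mat n1 n2) (c : ℝ) : Prop :=
  ∀ c' : ℝ, nuclNorm (oplus M c) ≤ nuclNorm (oplus M c')

/-- `U` and `V` have as columns top-`r` left and right singular vectors of `A`. -/
def IsTopSVD (r : ℕ) (A : Mat n1 n2) (U : Matrix (Fin n1) (Fin r) ℝ)
    (V : Matrix (Fin n2) (Fin r) ℝ) : Prop :=
  Uᵀ * U = 1 ∧ Vᵀ * V = 1 ∧
  A * V = U * Matrix.diagonal (fun k : Fin r => sval A (k.1 + 1)) ∧
  Aᵀ * U = V * Matrix.diagonal (fun k : Fin r => sval A (k.1 + 1))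

/-- A choice of top-`r` left and right singular vector matrices of `A`. -/
def UVchoice (r : ℕ) (A : Mat n1 n2) :
    Matrix (Fin n1) (Fin r) ℝ × Matrix (Fin n2) (Fin r) ℝ :=
  if h : ∃ p : Matrix (Fin n1) (Fin r) ℝ × Matrix (Fin n2) (Fin r) ℝ,
      IsTopSVD r A p.1 p.2 then h.choose else (0, 0)

/-- `Θ2 = (I − UUᵀ)(Θ ⊖ M_m(Θ))(I − VVᵀ)`, with `U,V` top-`r` singular vectors of
`M* ⊕ M_m(Θ)`. -/
def theta2 (Mstar : Mat n1 n2) (r : ℕ) (Θ : Mat n1 n2) : Mat n1 n2 :=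
  (1 - (UVchoice r (oplus Mstar (matMean Θ))).1 * (UVchoice r (oplus Mstar (matMean Θ))).1ᵀ) *
    oplus Θ (-matMean Θ) *
  (1 - (UVchoice r (oplus Mstar (matMean Θ))).2 * (UVchoice r (oplus Mstar (matMean Θ))).2ᵀ)

/-- `Θ1 = Θ ⊖ M_m(Θ) − Θ2`. -/
def theta1 (Mstar : Mat n1 n2) (r : ℕ) (Θ : Mat n1 n2) : Mat n1 n2 :=
  oplus Θ (-matMean Θ) - theta2 Mstar r Θ

/-- The cone `C_r = {Θ : ‖Θ2‖_* ≤ 4 Σ_{k=r}^{n1∧n2} σ_k(M*) + 3‖Θ1‖_*}`. -/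
def coneC (Mstar : Mat n1 n2) (r : ℕ) : Set (Mat n1 n2) :=
  {Θ | nuclNorm (theta2 Mstar r Θ) ≤ 4 * tailSum Mstar r + 3 * nuclNorm (theta1 Mstar r Θ)}

/-- Euclidean norm of a vector. -/
def euclNorm {n : ℕ} (v : Fin n → ℝ) : ℝ := Real.sqrt (∑ i, v i ^ 2)

/-- The quantity `𝔅(M*)` of Theorem 4, computed from `T(M*) = M* ⊕ cstar`. -/
def Bconst (Mstar : Mat n1 n2) (cstar : ℝ) : ℝ :=
  euclNorm ((1 - (UVchoice (oplus Mstar cstar).rank (oplus Mstar cstar)).1 *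
        (UVchoice (oplus Mstar cstar).rank (oplus Mstar cstar)).1ᵀ).mulVec fun _ => (1 : ℝ)) *
    euclNorm ((1 - (UVchoice (oplus Mstar cstar).rank (oplus Mstar cstar)).2 *
        (UVchoice (oplus Mstar cstar).rank (oplus Mstar cstar)).2ᵀ).mulVec fun _ => (1 : ℝ)) /
      Real.sqrt ((n1 : ℝ) * (n2 : ℝ)) -
  Real.sqrt ((n1 : ℝ) * (n2 : ℝ)) *
    |matMean ((UVchoice (oplus Mstar cstar).rank (oplus Mstar cstar)).1 *
      (UVchoice (oplus Mstar cstar).rank (oplus Mstar cstar)).2ᵀ)|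

/-- The log-normalization function `b(m) = log ∫ exp(x m + f(x)) dν(x)`. -/
def bFun (ν : Measure ℝ) (f : ℝ → ℝ) (m : ℝ) : ℝ :=
  Real.log ((∫⁻ x, ENNReal.ofReal (Real.exp (x * m + f x)) ∂ν).toReal)

/-- The random variables `Z̃_{i1j1,i2j2}` of the conditional sub-Gaussian condition. -/
def Ztil {Ω : Type} (Mstar : Mat n1 n2) (X : Ω → Mat n1 n2)
    (i1 : Fin n1) (j1 : Fin n2) (i2 : Fin n1) (j2 : Fin n2) (ω : Ω) : ℝ :=
  (X ω i1 j1 - X ω i2 j2) /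
    (2 + Real.exp ((X ω i1 j1 - X ω i2 j2) * (Mstar i1 j1 - Mstar i2 j2)) +
      Real.exp (-((X ω i1 j1 - X ω i2 j2) * (Mstar i1 j1 - Mstar i2 j2))))

/-- `π_U = max_{i,j} P(W_{ij} = 1)`. -/
def piU {Ω : Type} [MeasurableSpace Ω] (P : Measure Ω) (W : Ω → Mat n1 n2) : ℝ :=
  sSup (Set.range fun p : Fin n1 × Fin n2 => (P {ω | W ω p.1 p.2 = 1}).toReal)

/-- `π_L = min_{i,j} P(W_{ij} = 1)`. -/
def piL {Ω : Type} [MeasurableSpace Ω] (P : Measure Ω) (W : Ω → Mat n1 n2) : ℝ :=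
  sInf (Set.range fun p : Fin n1 × Fin n2 => (P {ω | W ω p.1 p.2 = 1}).toReal)

/-- Rectangular diagonal matrix with diagonal entries `d 0, d 1, …`. -/
def rectDiag (n1 n2 : ℕ) (d : ℕ → ℝ) : Mat n1 n2 :=
  fun i j => if (i : ℕ) = (j : ℕ) then d (i : ℕ) else 0

/-!
Write `L(M) = ∑ₖ cₖ φ_{dₖ}(m_{pₖ} - m_{qₖ})`, summing over the row and column pairs `k = (pₖ, qₖ)`,
with `φ_d(t) = log(1 + e^{-dt})`, `cₖ = W_{pₖ} W_{qₖ} / n` and `dₖ = X_{pₖ} - X_{qₖ}`.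
Since `0 ≤ φ_d'' ≤ d² / 4`, the mean value theorem writes `D = ∇L(M₁) - ∇L(M₂)` as a weighted
graph Laplacian, with weights `cₖ sₖ` and `sₖ ∈ [0, dₖ² / 4]`, applied to `E = M₁ - M₂`. So
`‖D‖² = Q(E, D)` for the positive semidefinite form `Q` of that Laplacian, Cauchy–Schwarz gives
`‖D‖⁴ ≤ Q(E, E) Q(D, D)`, and it suffices that
`Q(u, u) ≤ ∑ₖ cₖ dₖ² / 4 (u_{pₖ} - u_{qₖ})² ≤ L_f ‖u‖²`. The last bound follows from
`dₖ² ≤ L_x` on observed pairs and `∑_{j,j'} w_j w_{j'} (u_j - u_{j'})² ≤ 2 (∑_j w_j) ∑_j u_j²`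
for weights `w_j ∈ [0, 1]`.
-/

open Function

def logisticLoss (d t : ℝ) : ℝ := Real.log (1 + Real.exp (-(d * t)))

def logisticLossDeriv (d t : ℝ) : ℝ := -d / (1 + Real.exp (d * t))

theorem hasDerivAt_logisticLoss (d t : ℝ) :
    HasDerivAt (logisticLoss d) (logisticLossDeriv d t) t := by
  have hinner : HasDerivAt (fun s => 1 + Real.exp (-(d * s))) (Real.exp (-(d * t)) * -d) t := by
    simpa using (((hasDerivAt_id t).const_mul d).neg.exp).const_add 1
  refine (hinner.log (by positivity)).congr_deriv ?_
  rw [logisticLossDeriv, Real.exp_neg]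
  field_simp
  ring

theorem hasDerivAt_logisticLossDeriv (d t : ℝ) :
    HasDerivAt (logisticLossDeriv d)
      (d ^ 2 * Real.exp (d * t) / (1 + Real.exp (d * t)) ^ 2) t := by
  have hden : HasDerivAt (fun s => 1 + Real.exp (d * s)) (Real.exp (d * t) * d) t := by
    simpa using (((hasDerivAt_id t).const_mul d).exp).const_add 1
  refine ((hasDerivAt_const t (-d)).fun_div hden (by positivity)).congr_deriv ?_
  ring

theorem sq_mul_exp_div_one_add_exp_sq_le (d t : ℝ) :
    d ^ 2 * Real.exp (d * t) / (1 + Real.exp (d * t)) ^ 2 ≤ d ^ 2 / 4 := by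
  rw [div_le_div_iff₀ (by positivity) (by norm_num)]
  nlinarith [Real.exp_pos (d * t), mul_nonneg (sq_nonneg d) (sq_nonneg (1 - Real.exp (d * t)))]

theorem slope_mem_Icc_of_hasDerivAt {f f' : ℝ → ℝ} {C : ℝ} (hf : ∀ t, HasDerivAt f (f' t) t)
    (hf' : ∀ t, f' t ∈ Set.Icc 0 C) (a b : ℝ) : slope f a b ∈ Set.Icc 0 C := by
  have of_lt : ∀ a b, a < b → slope f a b ∈ Set.Icc 0 C := fun a b hab => by
    obtain ⟨c, -, hc⟩ := exists_hasDerivAt_eq_slope f f' hab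
      (fun t _ => (hf t).continuousAt.continuousWithinAt) (fun t _ => hf t)
    rw [slope_def_field, ← hc]
    exact hf' c
  rcases lt_trichotomy a b with hab | rfl | hba
  · exact of_lt a b hab
  · rw [slope_same]; exact ⟨le_rfl, (hf' a).1.trans (hf' a).2⟩
  · rw [slope_comm]; exact of_lt b a hba

theorem slope_logisticLossDeriv_mem_Icc (d a b : ℝ) :
    slope (logisticLossDeriv d) a b ∈ Set.Icc 0 (d ^ 2 / 4) :=
  slope_mem_Icc_of_hasDerivAt (hasDerivAt_logisticLossDeriv d)
    (fun t => ⟨by positivity, sq_mul_exp_div_one_add_exp_sq_le d t⟩) a b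

theorem sqrt_le_mul_sqrt_of_sq_le {a b K : ℝ} (ha : 0 ≤ a) (hK : 0 ≤ K)
    (h : a ^ 2 ≤ (K * b) * (K * a)) : √a ≤ K * √b := by
  rcases ha.eq_or_lt with rfl | ha
  · simp only [Real.sqrt_zero]; positivity
  have hab : a ≤ K ^ 2 * b := le_of_mul_le_mul_right (by nlinarith) ha
  calc √a ≤ √(K ^ 2 * b) := Real.sqrt_le_sqrt hab
    _ = K * √b := by rw [Real.sqrt_mul (sq_nonneg K), Real.sqrt_sq hK]

section PairwiseLoss

variable {κ ι : Type*} [Fintype κ] [Fintype ι] [DecidableEq κ] (c d : ι → ℝ) (p q : ι → κ)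

def pairLoss (m : κ → ℝ) : ℝ := ∑ k, c k * logisticLoss (d k) (m (p k) - m (q k))

def pairLossGrad (m : κ → ℝ) (x : κ) : ℝ :=
  ∑ k, c k * logisticLossDeriv (d k) (m (p k) - m (q k)) *
    ((if p k = x then 1 else 0) - if q k = x then 1 else 0)

omit [Fintype κ] in
theorem hasDerivAt_update_apply (m : κ → ℝ) (x y : κ) (t : ℝ) :
    HasDerivAt (fun s => update m x s y) (if y = x then 1 else 0) t := by
  by_cases h : y = x
  · subst h; simpa using hasDerivAt_id' t
  · simpa [h] using hasDerivAt_const t (m y)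

omit [Fintype κ] in
theorem hasDerivAt_pairLoss_update (m : κ → ℝ) (x : κ) :
    HasDerivAt (fun t => pairLoss c d p q (update m x t)) (pairLossGrad c d p q m x) (m x) := by
  refine HasDerivAt.fun_sum fun k _ => ?_
  have hdiff := (hasDerivAt_update_apply m x (p k) (m x)).fun_sub
    (hasDerivAt_update_apply m x (q k) (m x))
  have hcomp := (hasDerivAt_logisticLoss (d k) (m (p k) - m (q k))).comp_of_eq (m x) hdiff
    (by simp)
  rw [mul_assoc]
  exact hcomp.const_mul (c k)

theorem sum_pairLossGrad_mul (m v : κ → ℝ) :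
    ∑ x, pairLossGrad c d p q m x * v x =
      ∑ k, c k * logisticLossDeriv (d k) (m (p k) - m (q k)) * (v (p k) - v (q k)) := by
  simp only [pairLossGrad, Finset.sum_mul]
  rw [Finset.sum_comm]
  refine Finset.sum_congr rfl fun k _ => ?_
  simp [mul_assoc, ← Finset.mul_sum, sub_mul, Finset.sum_sub_distrib, ite_mul]

theorem sqrt_sum_sq_pairLossGrad_sub_le (hc : ∀ k, 0 ≤ c k) {K : ℝ} (hK0 : 0 ≤ K)
    (hK : ∀ u : κ → ℝ, ∑ k, c k * (d k ^ 2 / 4) * (u (p k) - u (q k)) ^ 2 ≤ K * ∑ x, u x ^ 2)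
    (m₁ m₂ : κ → ℝ) :
    √(∑ x, (pairLossGrad c d p q m₁ x - pairLossGrad c d p q m₂ x) ^ 2) ≤
      K * √(∑ x, (m₁ x - m₂ x) ^ 2) := by
  set D := fun x => pairLossGrad c d p q m₁ x - pairLossGrad c d p q m₂ x
  set e := fun x => m₁ x - m₂ x
  set w := fun k =>
    c k * slope (logisticLossDeriv (d k)) (m₂ (p k) - m₂ (q k)) (m₁ (p k) - m₁ (q k))
  have hw : ∀ k, w k ∈ Set.Icc 0 (c k * (d k ^ 2 / 4)) := fun k =>
    have h := slope_logisticLossDeriv_mem_Icc (d k) (m₂ (p k) - m₂ (q k)) (m₁ (p k) - m₁ (q k))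
    ⟨mul_nonneg (hc k) h.1, mul_le_mul_of_nonneg_left h.2 (hc k)⟩
  have hpair : ∀ v : κ → ℝ,
      ∑ x, D x * v x = ∑ k, w k * (e (p k) - e (q k)) * (v (p k) - v (q k)) := fun v => by
    simp only [D, sub_mul, Finset.sum_sub_distrib]
    rw [sum_pairLossGrad_mul, sum_pairLossGrad_mul, ← Finset.sum_sub_distrib]
    refine Finset.sum_congr rfl fun k _ => ?_
    have hslope := sub_smul_slope (logisticLossDeriv (d k))
      (m₂ (p k) - m₂ (q k)) (m₁ (p k) - m₁ (q k))
    simp only [smul_eq_mul, vsub_eq_sub] at hslope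
    simp only [w, e]
    linear_combination -(c k * (v (p k) - v (q k))) * hslope
  have hquad : ∀ u : κ → ℝ, ∑ k, w k * (u (p k) - u (q k)) ^ 2 ≤ K * ∑ x, u x ^ 2 := fun u =>
    (Finset.sum_le_sum fun k _ => mul_le_mul_of_nonneg_right (hw k).2 (sq_nonneg _)).trans (hK u)
  have hquad_nonneg : ∀ u : κ → ℝ, 0 ≤ ∑ k, w k * (u (p k) - u (q k)) ^ 2 := fun u =>
    Finset.sum_nonneg fun k _ => mul_nonneg (hw k).1 (sq_nonneg _)
  refine sqrt_le_mul_sqrt_of_sq_le (Finset.sum_nonneg fun x _ => sq_nonneg _) hK0 ?_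
  calc (∑ x, D x ^ 2) ^ 2 = (∑ k, w k * (e (p k) - e (q k)) * (D (p k) - D (q k))) ^ 2 := by
        simp only [sq (D _), hpair]
    _ ≤ (∑ k, w k * (e (p k) - e (q k)) ^ 2) * ∑ k, w k * (D (p k) - D (q k)) ^ 2 :=
        Finset.sum_sq_le_sum_mul_sum_of_sq_le_mul _ (fun k _ => mul_nonneg (hw k).1 (sq_nonneg _))
          (fun k _ => mul_nonneg (hw k).1 (sq_nonneg _)) (fun k _ => le_of_eq (by ring))
    _ ≤ (K * ∑ x, e x ^ 2) * (K * ∑ x, D x ^ 2) :=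
        mul_le_mul (hquad e) (hquad D) (hquad_nonneg D) ((hquad_nonneg e).trans (hquad e))

end PairwiseLoss

theorem sum_sum_mul_mul_sub_sq_le {α : Type*} [Fintype α] (w u : α → ℝ)
    (hw : ∀ a, w a ∈ Set.Icc 0 1) :
    ∑ a, ∑ b, w a * w b * (u a - u b) ^ 2 ≤ 2 * (∑ a, w a) * ∑ a, u a ^ 2 := by
  have hexpand : ∑ a, ∑ b, w a * w b * (u a - u b) ^ 2 =
      2 * ((∑ a, w a) * ∑ a, w a * u a ^ 2 - (∑ a, w a * u a) ^ 2) := by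
    have hterm : ∀ a b, w a * w b * (u a - u b) ^ 2 =
        w a * u a ^ 2 * w b + w a * (w b * u b ^ 2) - 2 * (w a * u a * (w b * u b)) :=
      fun _ _ => by ring
    simp only [hterm, Finset.sum_sub_distrib, Finset.sum_add_distrib, ← Finset.sum_mul,
      ← Finset.mul_sum]
    ring
  have hweighted : ∑ a, w a * u a ^ 2 ≤ ∑ a, u a ^ 2 :=
    Finset.sum_le_sum fun a _ => mul_le_of_le_one_left (sq_nonneg _) (hw a).2
  have hmass : 0 ≤ ∑ a, w a := Finset.sum_nonneg fun a _ => (hw a).1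
  rw [hexpand]
  nlinarith [sq_nonneg (∑ a, w a * u a), mul_le_mul_of_nonneg_left hweighted hmass]

theorem sum_rowPairs_le {α β : Type*} [Fintype α] [Fintype β] (X W U : Matrix α β ℝ)
    (hW : ∀ i j, W i j = 0 ∨ W i j = 1) {A R : ℝ} (hA0 : 0 ≤ A)
    (hA : ∀ i j j', W i j = 1 → W i j' = 1 → (X i j - X i j') ^ 2 ≤ A)
    (hR : ∀ i, ∑ j, W i j ≤ R) :
    ∑ i, ∑ j, ∑ j', W i j * W i j' * (X i j - X i j') ^ 2 * (U i j - U i j') ^ 2 ≤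
      2 * A * R * ∑ i, ∑ j, U i j ^ 2 := by
  have hgap : ∀ i j j', W i j * W i j' * (X i j - X i j') ^ 2 ≤ A * (W i j * W i j') := by
    intro i j j'
    rcases hW i j with h | h <;> rcases hW i j' with h' | h' <;> simp [h, h', hA i j j']
  have hW_Icc : ∀ i j, W i j ∈ Set.Icc (0 : ℝ) 1 := fun i j => by
    rcases hW i j with h | h <;> simp [h]
  calc ∑ i, ∑ j, ∑ j', W i j * W i j' * (X i j - X i j') ^ 2 * (U i j - U i j') ^ 2
      ≤ ∑ i, A * ∑ j, ∑ j', W i j * W i j' * (U i j - U i j') ^ 2 := by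
        simp only [Finset.mul_sum]
        refine Finset.sum_le_sum fun i _ => Finset.sum_le_sum fun j _ =>
          Finset.sum_le_sum fun j' _ => ?_
        rw [← mul_assoc]
        exact mul_le_mul_of_nonneg_right (hgap i j j') (sq_nonneg _)
    _ ≤ ∑ i, A * (2 * R * ∑ j, U i j ^ 2) := by
        gcongr with i _
        refine (sum_sum_mul_mul_sub_sq_le (W i) (U i) (hW_Icc i)).trans ?_
        gcongr
        exact hR i
    _ = 2 * A * R * ∑ i, ∑ j, U i j ^ 2 := by
        rw [Finset.mul_sum]
        ring_nf

abbrev PairIdx (n1 n2 : ℕ) := (Fin n1 × Fin n2 × Fin n2) ⊕ (Fin n2 × Fin n1 × Fin n1)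

def pairFst : PairIdx n1 n2 → Fin n1 × Fin n2
  | .inl (i, j, _) => (i, j)
  | .inr (j, i, _) => (i, j)

def pairSnd : PairIdx n1 n2 → Fin n1 × Fin n2
  | .inl (i, _, j) => (i, j)
  | .inr (j, _, i) => (i, j)

def pairWeight (W : Mat n1 n2) : PairIdx n1 n2 → ℝ
  | .inl (i, j1, j2) => 1 / (n2 : ℝ) * (W i j1 * W i j2)
  | .inr (j, i1, i2) => 1 / (n1 : ℝ) * (W i1 j * W i2 j)

def entries (M : Mat n1 n2) (x : Fin n1 × Fin n2) : ℝ := M x.1 x.2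

def pairGap (X : Mat n1 n2) (k : PairIdx n1 n2) : ℝ :=
  entries X (pairFst k) - entries X (pairSnd k)

theorem lossL_eq_pairLoss (X W M : Mat n1 n2) :
    lossL X W M = pairLoss (pairWeight W) (pairGap X) pairFst pairSnd (entries M) := by
  simp only [lossL, pairLoss, Fintype.sum_sum_type, Fintype.sum_prod_type, pairWeight, pairGap,
    pairFst, pairSnd, entries, Finset.mul_sum, mul_assoc]
  rfl

theorem entries_updEntry (M : Mat n1 n2) (i : Fin n1) (j : Fin n2) (t : ℝ) :
    entries (updEntry M i j t) = update (entries M) (i, j) t := by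
  ext ⟨a, b⟩
  simp [entries, updEntry, update_apply]

theorem gradL_eq_pairLossGrad (X W M : Mat n1 n2) (i : Fin n1) (j : Fin n2) :
    gradL X W M i j =
      pairLossGrad (pairWeight W) (pairGap X) pairFst pairSnd (entries M) (i, j) := by
  have hloss : (fun t => lossL X W (updEntry M i j t)) =
      fun t => pairLoss (pairWeight W) (pairGap X) pairFst pairSnd (update (entries M) (i, j) t) :=
    funext fun t => by rw [lossL_eq_pairLoss, entries_updEntry]
  rw [gradL, hloss]
  exact (hasDerivAt_pairLoss_update _ _ _ _ (entries M) (i, j)).deriv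

theorem pairWeight_nonneg {W : Mat n1 n2} (hW01 : ∀ i j, W i j = 0 ∨ W i j = 1)
    (k : PairIdx n1 n2) : 0 ≤ pairWeight W k := by
  have hW : ∀ i j, 0 ≤ W i j := fun i j => by rcases hW01 i j with h | h <;> simp [h]
  rcases k with ⟨i, j1, j2⟩ | ⟨j, i1, i2⟩
  · exact mul_nonneg (by positivity) (mul_nonneg (hW i j1) (hW i j2))
  · exact mul_nonneg (by positivity) (mul_nonneg (hW i1 j) (hW i2 j))

theorem sq_sub_le_Lx (X : Mat n1 n2) {W : Mat n1 n2} {a c : Fin n1} {b d : Fin n2}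
    (hab : W a b = 1) (hcd : W c d = 1) : (X a b - X c d) ^ 2 ≤ Lx X W := by
  set S := {x : ℝ | ∃ p : Fin n1 × Fin n2, W p.1 p.2 = 1 ∧ x = X p.1 p.2}
  have hS : S.Finite := (Set.finite_range fun p : Fin n1 × Fin n2 => X p.1 p.2).subset
    fun x ⟨p, _, hx⟩ => ⟨p, hx.symm⟩
  have hab' : X a b ∈ S := ⟨(a, b), hab, rfl⟩
  have hcd' : X c d ∈ S := ⟨(c, d), hcd, rfl⟩
  have := le_csSup hS.bddAbove hab'
  have := le_csSup hS.bddAbove hcd'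
  have := csInf_le hS.bddBelow hab'
  have := csInf_le hS.bddBelow hcd'
  exact sq_le_sq' (by linarith) (by linarith)

theorem Lf_nonneg (X : Mat n1 n2) {W : Mat n1 n2} (hW01 : ∀ i j, W i j = 0 ∨ W i j = 1) :
    0 ≤ Lf X W := by
  have hW : ∀ i j, 0 ≤ W i j := fun i j => by rcases hW01 i j with h | h <;> simp [h]
  have hcol : 0 ≤ sSup (Set.range fun j : Fin n2 => ∑ i, W i j) :=
    Real.sSup_nonneg (by rintro _ ⟨j, rfl⟩; exact Finset.sum_nonneg fun i _ => hW i j)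
  have hrow : 0 ≤ sSup (Set.range fun i : Fin n1 => ∑ j, W i j) :=
    Real.sSup_nonneg (by rintro _ ⟨i, rfl⟩; exact Finset.sum_nonneg fun j _ => hW i j)
  unfold Lf Lw Lx
  positivity

theorem pairWeight_quadForm_le (X : Mat n1 n2) {W : Mat n1 n2}
    (hW01 : ∀ i j, W i j = 0 ∨ W i j = 1) (u : Fin n1 × Fin n2 → ℝ) :
    ∑ k, pairWeight W k * (pairGap X k ^ 2 / 4) * (u (pairFst k) - u (pairSnd k)) ^ 2 ≤
      Lf X W * ∑ x, u x ^ 2 := by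
  set Rrow := sSup (Set.range fun i : Fin n1 => ∑ j, W i j)
  set Rcol := sSup (Set.range fun j : Fin n2 => ∑ i, W i j)
  have hLx : 0 ≤ Lx X W := sq_nonneg _
  have hrow := sum_rowPairs_le X W (Matrix.of fun i j => u (i, j)) hW01 hLx
    (fun _ _ _ => sq_sub_le_Lx X)
    (fun i => le_csSup (Set.finite_range _).bddAbove ⟨i, rfl⟩ : ∀ i, ∑ j, W i j ≤ Rrow)
  -- the column pairs of `X` are the row pairs of `Xᵀ`
  have hcol := sum_rowPairs_le Xᵀ Wᵀ (Matrix.of fun i j => u (i, j))ᵀ (fun j i => hW01 i j) hLx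
    (fun _ _ _ => sq_sub_le_Lx X)
    (fun j => le_csSup (Set.finite_range _).bddAbove ⟨j, rfl⟩ : ∀ j, ∑ i, W i j ≤ Rcol)
  simp only [Matrix.of_apply, Matrix.transpose_apply] at hrow hcol
  rw [Finset.sum_comm (f := fun j i => u (i, j) ^ 2)] at hcol
  have hsplit :
      ∑ k, pairWeight W k * (pairGap X k ^ 2 / 4) * (u (pairFst k) - u (pairSnd k)) ^ 2 =
        1 / (4 * n2) * ∑ i, ∑ j, ∑ j',
          W i j * W i j' * (X i j - X i j') ^ 2 * (u (i, j) - u (i, j')) ^ 2 +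
        1 / (4 * n1) * ∑ j, ∑ i, ∑ i',
          W i j * W i' j * (X i j - X i' j) ^ 2 * (u (i, j) - u (i', j)) ^ 2 := by
    simp only [Fintype.sum_sum_type, Fintype.sum_prod_type, pairWeight, pairGap, pairFst, pairSnd,
      entries, Finset.mul_sum]
    congr 1 <;> exact Finset.sum_congr rfl fun _ _ => Finset.sum_congr rfl fun _ _ =>
      Finset.sum_congr rfl fun _ _ => by ring
  rw [hsplit, Fintype.sum_prod_type]
  calc _ ≤ 1 / (4 * n2) * (2 * Lx X W * Rrow * ∑ i, ∑ j, u (i, j) ^ 2) +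
        1 / (4 * n1) * (2 * Lx X W * Rcol * ∑ i, ∑ j, u (i, j) ^ 2) := by gcongr
    _ = Lf X W * ∑ i, ∑ j, u (i, j) ^ 2 := by unfold Lf Lw; ring

theorem statement18_general (n1 n2 : ℕ)
    (X W : Mat n1 n2) (hW01 : ∀ i j, W i j = 0 ∨ W i j = 1)
    (M1 M2 : Mat n1 n2) :
    frobNorm (gradL X W M1 - gradL X W M2) ≤ Lf X W * frobNorm (M1 - M2) := by
  have h := sqrt_sum_sq_pairLossGrad_sub_le (pairWeight W) (pairGap X) pairFst pairSnd
    (pairWeight_nonneg hW01) (Lf_nonneg X hW01) (pairWeight_quadForm_le X hW01)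
    (entries M1) (entries M2)
  simpa only [frobNorm, Matrix.sub_apply, gradL_eq_pairLossGrad, Fintype.sum_prod_type,
    entries] using h

theorem statement18 (n1 n2 : ℕ) (hn1 : 0 < n1) (hn2 : 0 < n2)
    (X W : Mat n1 n2) (hW01 : ∀ i j, W i j = 0 ∨ W i j = 1)
    (hWnz : ∃ i j, W i j = 1)
    (M1 M2 : Mat n1 n2) :
    frobNorm (gradL X W M1 - gradL X W M2) ≤ Lf X W * frobNorm (M1 - M2) :=
  statement18_general n1 n2 X W hW01 M1 M2

end NMC
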